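/- For the four-qudit code, the two-damping diagonal matrix element on the first qudit satisfies ⟨m_L| (A_2 ⊗ A_0^{⊗3})† (A_2 ⊗ A_0^{⊗3}) |m_L⟩ = (γ²/d) ∑_{i=2}^{d−1} (i(i−1)/2) (1−γ)^{2i + 2((i+m) mod d) − 2}, whose leading-order coefficient in γ² is (d−1)(d−2)/6, independent of m. -/
import Mathlib

open Matrix

/-- The qudit amplitude-damping Kraus operator `A_k`. -/
noncomputable def ampDamp (d : ℕ) (γ : ℝ) (k : ℕ) : Matrix (Fin d) (Fin d) ℂ :=
  fun a b => if (a : ℕ) + k = (b : ℕ) then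
    ((Real.sqrt (((b : ℕ).choose k) * ((1 - γ) ^ ((b : ℕ) - k) * γ ^ k)) : ℝ) : ℂ)
  else 0

/-- The four-qudit codeword `|m_L⟩`. -/
noncomputable def codeword (d : ℕ) [NeZero d] (m : Fin d) :
    Fin d × Fin d × Fin d × Fin d → ℂ :=
  fun p => (1 / (Real.sqrt d : ℂ)) *
    (if p.2.1 = p.1 ∧ p.2.2.1 = p.1 + m ∧ p.2.2.2 = p.1 + m then 1 else 0)

/-- Four-fold tensor product of single-qudit operators. -/
def tens4 {d : ℕ} (A B C D : Matrix (Fin d) (Fin d) ℂ) :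
    Matrix (Fin d × Fin d × Fin d × Fin d) (Fin d × Fin d × Fin d × Fin d) ℂ :=
  fun p q => A p.1 q.1 * B p.2.1 q.2.1 * C p.2.2.1 q.2.2.1 * D p.2.2.2 q.2.2.2

/-- The inner product `⟨v|w⟩`. -/
noncomputable def inn {α : Type*} [Fintype α] (v w : α → ℂ) : ℂ :=
  ∑ p, (starRingEnd ℂ) (v p) * w p

lemma mulVec_eq (d : ℕ) [NeZero d] (γ : ℝ) (m : Fin d) (p : Fin d × Fin d × Fin d × Fin d) :
    (tens4 (ampDamp d γ 2) (ampDamp d γ 0) (ampDamp d γ 0) (ampDamp d γ 0)).mulVec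
      (codeword d m) p =
    (1 / (Real.sqrt d : ℂ)) * (ampDamp d γ 2 p.1 p.2.1 * ampDamp d γ 0 p.2.1 p.2.1 *
      ampDamp d γ 0 p.2.2.1 (p.2.1 + m) * ampDamp d γ 0 p.2.2.2 (p.2.1 + m)) := by
  simp only [Matrix.mulVec, dotProduct, codeword, tens4, Fintype.sum_prod_type,
    mul_ite, mul_one, mul_zero, ite_and]
  simp only [Finset.sum_ite_eq', Finset.sum_ite_eq, Finset.mem_univ, if_true, one_div]
  simp [Finset.sum_ite_eq', Finset.sum_ite_eq]
  rw [Finset.sum_eq_single p.2.1]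
  · ring
  · intro b _ hb
    have h0 : ampDamp d γ 0 p.2.1 b = 0 := by
      rw [ampDamp, if_neg]
      intro h; exact hb (Fin.ext (by omega))
    rw [h0]; ring
  · simp

lemma conj_ampDamp (d : ℕ) (γ : ℝ) (k : ℕ) (a b : Fin d) :
    (starRingEnd ℂ) (ampDamp d γ k a b) = ampDamp d γ k a b := by
  rw [ampDamp]
  split <;> simp [Complex.conj_ofReal]

lemma ampDamp_mul_self (d : ℕ) (γ : ℝ) (h0 : 0 ≤ γ) (h1 : γ ≤ 1) (k : ℕ) (a b : Fin d) :
    ampDamp d γ k a b * ampDamp d γ k a b =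
      if (a : ℕ) + k = (b : ℕ) then
        ((((b : ℕ).choose k : ℝ) * ((1 - γ) ^ ((b : ℕ) - k) * γ ^ k) : ℝ) : ℂ)
      else 0 := by
  rw [ampDamp]
  split
  · rw [← Complex.ofReal_mul, Real.mul_self_sqrt]
    exact mul_nonneg (Nat.cast_nonneg _)
      (mul_nonneg (pow_nonneg (by linarith) _) (pow_nonneg h0 _))
  · simp

lemma sum_shift (d : ℕ) (j : ℕ) (hj : j < d) (x : ℂ) :
    ∑ a : Fin d, (if (a : ℕ) + 2 = j then x else 0) = if 2 ≤ j then x else 0 := by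
  rcases le_or_gt 2 j with h | h
  · rw [if_pos h, Finset.sum_eq_single (⟨j - 2, by omega⟩ : Fin d)]
    · rw [if_pos (by simp; omega)]
    · intro b _ hb
      rw [if_neg]
      intro hc; exact hb (Fin.ext (by simp; omega))
    · simp
  · rw [if_neg (by omega)]
    exact Finset.sum_eq_zero fun a _ => if_neg (by omega)

lemma sum_tri : ∀ n : ℕ, ∑ i ∈ Finset.Icc 2 n, ((i : ℝ) * ((i : ℝ) - 1) / 2)
    = ((n : ℝ) + 1) * n * ((n : ℝ) - 1) / 6 := by
  intro n
  induction n with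
  | zero => simp
  | succ n ih =>
    rcases Nat.eq_zero_or_pos n with rfl | hn
    · norm_num
    · rw [Finset.sum_Icc_succ_top (by omega), ih]
      push_cast
      ring

/-- The two-damping diagonal matrix element on the first qudit equals
`(γ²/d) ∑_{i=2}^{d-1} (i(i-1)/2) (1-γ)^(2i + 2((i+m) mod d) - 2)`, whose
leading-order coefficient in `γ²` is `(d-1)(d-2)/6`, independent of `m`. -/
theorem two_damping_matrix_element (d : ℕ) [NeZero d] (hd : 3 ≤ d)
    (γ : ℝ) (hγ : γ ∈ Set.Ioo (0 : ℝ) 1) (m : Fin d) :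
    inn ((tens4 (ampDamp d γ 2) (ampDamp d γ 0) (ampDamp d γ 0)
          (ampDamp d γ 0)).mulVec (codeword d m))
        ((tens4 (ampDamp d γ 2) (ampDamp d γ 0) (ampDamp d γ 0)
          (ampDamp d γ 0)).mulVec (codeword d m))
      = (((γ ^ 2 / d) * ∑ i ∈ Finset.Icc 2 (d - 1),
          ((i : ℝ) * ((i : ℝ) - 1) / 2) *
            (1 - γ) ^ (2 * i + 2 * ((i + (m : ℕ)) % d) - 2) : ℝ) : ℂ) ∧
    Filter.Tendsto (fun g : ℝ => (1 / d : ℝ) * ∑ i ∈ Finset.Icc 2 (d - 1),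
        ((i : ℝ) * ((i : ℝ) - 1) / 2) *
          (1 - g) ^ (2 * i + 2 * ((i + (m : ℕ)) % d) - 2))
      (nhds 0) (nhds ((d - 1 : ℝ) * (d - 2 : ℝ) / 6)) := by
  obtain ⟨hγ0, hγ1⟩ := hγ
  have hd0 : (d : ℝ) ≠ 0 := Nat.cast_ne_zero.mpr (by omega)
  constructor
  · -- the exact matrix element
    rw [inn]
    -- explicit value of each summand
    have key : ∀ p : Fin d × Fin d × Fin d × Fin d,
        (starRingEnd ℂ) ((tens4 (ampDamp d γ 2) (ampDamp d γ 0) (ampDamp d γ 0)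
            (ampDamp d γ 0)).mulVec (codeword d m) p) *
          ((tens4 (ampDamp d γ 2) (ampDamp d γ 0) (ampDamp d γ 0)
            (ampDamp d γ 0)).mulVec (codeword d m) p)
        = (1 / (d : ℂ)) *
            ((ampDamp d γ 2 p.1 p.2.1 * ampDamp d γ 2 p.1 p.2.1) *
             (ampDamp d γ 0 p.2.1 p.2.1 * ampDamp d γ 0 p.2.1 p.2.1) *
             (ampDamp d γ 0 p.2.2.1 (p.2.1 + m) * ampDamp d γ 0 p.2.2.1 (p.2.1 + m)) *
             (ampDamp d γ 0 p.2.2.2 (p.2.1 + m) * ampDamp d γ 0 p.2.2.2 (p.2.1 + m))) := by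
      intro p
      rw [mulVec_eq]
      simp only [_root_.map_mul, conj_ampDamp, map_div₀, _root_.map_one, Complex.conj_ofReal]
      have hsd : (1 / (Real.sqrt d : ℂ)) * (1 / (Real.sqrt d : ℂ)) = 1 / (d : ℂ) := by
        rw [div_mul_div_comm, one_mul, ← Complex.ofReal_mul,
          Real.mul_self_sqrt (Nat.cast_nonneg d)]
        norm_num
      calc _ = ((1 / (Real.sqrt d : ℂ)) * (1 / (Real.sqrt d : ℂ))) *
            ((ampDamp d γ 2 p.1 p.2.1 * ampDamp d γ 2 p.1 p.2.1) *
             (ampDamp d γ 0 p.2.1 p.2.1 * ampDamp d γ 0 p.2.1 p.2.1) *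
             (ampDamp d γ 0 p.2.2.1 (p.2.1 + m) * ampDamp d γ 0 p.2.2.1 (p.2.1 + m)) *
             (ampDamp d γ 0 p.2.2.2 (p.2.1 + m) * ampDamp d γ 0 p.2.2.2 (p.2.1 + m))) := by
            ring
        _ = _ := by rw [hsd]
    rw [Finset.sum_congr rfl fun p _ => key p]
    simp only [ampDamp_mul_self d γ hγ0.le hγ1.le, add_zero, Nat.choose_zero_right,
      pow_zero, Nat.sub_zero, mul_one, Nat.cast_one, one_mul]
    rw [Fintype.sum_prod_type]
    simp only [Fintype.sum_prod_type, Fin.val_inj, mul_ite, ite_mul, mul_zero, zero_mul,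
      Finset.sum_ite_eq', Finset.mem_univ, if_true]
    rw [Finset.sum_comm]
    rw [Finset.sum_congr rfl fun x1 _ => sum_shift d _ x1.isLt _]
    simp only [Fin.val_add]
    rw [Fin.sum_univ_eq_sum_range (fun n => if 2 ≤ n then
        1 / (d : ℂ) *
          (((((n).choose 2 : ℝ) * ((1 - γ) ^ (n - 2) * γ ^ 2) : ℝ) : ℂ) *
            (((1 - γ) ^ n : ℝ) : ℂ) * (((1 - γ) ^ ((n + (m : ℕ)) % d) : ℝ) : ℂ) *
            (((1 - γ) ^ ((n + (m : ℕ)) % d) : ℝ) : ℂ))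
      else 0) d]
    rw [← Finset.sum_filter]
    have hfil : (Finset.range d).filter (fun n => 2 ≤ n) = Finset.Icc 2 (d - 1) := by
      ext n
      simp only [Finset.mem_filter, Finset.mem_range, Finset.mem_Icc]
      omega
    rw [hfil, Complex.ofReal_mul, Complex.ofReal_sum, Finset.mul_sum]
    refine Finset.sum_congr rfl fun n hn => ?_
    have h2n : 2 ≤ n := (Finset.mem_Icc.mp hn).1
    push_cast [Nat.cast_choose_two]
    rw [show 2 * n + 2 * ((n + (m : ℕ)) % d) - 2
        = (n - 2) + n + ((n + (m : ℕ)) % d) + ((n + (m : ℕ)) % d) by omega,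
      pow_add, pow_add, pow_add]
    ring
  · have hc : Continuous (fun g : ℝ => (1 / d : ℝ) * ∑ i ∈ Finset.Icc 2 (d - 1),
        ((i : ℝ) * ((i : ℝ) - 1) / 2) *
          (1 - g) ^ (2 * i + 2 * ((i + (m : ℕ)) % d) - 2)) := by
      refine continuous_const.mul (continuous_finset_sum _ fun i _ => ?_)
      exact continuous_const.mul ((continuous_const.sub continuous_id).pow _)
    have hval : (1 / d : ℝ) * ∑ i ∈ Finset.Icc 2 (d - 1),
        ((i : ℝ) * ((i : ℝ) - 1) / 2) *
          (1 - (0 : ℝ)) ^ (2 * i + 2 * ((i + (m : ℕ)) % d) - 2)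
        = (d - 1 : ℝ) * (d - 2 : ℝ) / 6 := by
      simp only [sub_zero, one_pow, mul_one]
      rw [sum_tri (d - 1)]
      have h1 : ((d - 1 : ℕ) : ℝ) = (d : ℝ) - 1 := by
        push_cast [Nat.cast_sub (by omega : 1 ≤ d)]
        ring
      rw [h1]
      field_simp
      ring
    rw [← hval]
    exact hc.tendsto 0
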